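/- arXiv:1205.4211 — 6 statements merged into one kernel-verified Lean document; each statement's English description precedes it below -/
import Mathlib

section
/- Assume F1, F2 and h are locally Lipschitz with respect to the variable x. Let C ⊆ D be an open set such that for every z ∈ C the map t ↦ h(t,z) has only isolated zeros in [0,T]. Then the averaged function f is continuous on C. -/
/-!
Away from the zeros of `h(·, z₀)` the integrand is continuous in `z` at `z₀`, because `sgn` is
locally constant off `0`. Isolated zeros in the compact interval `[0, T]` are finitely many, so
this holds for almost every `t`, and the integrand is bounded by `‖F1‖ + ‖F2‖`, which is bounded
on `[0, T] × K` for a compact neighbourhood `K ⊆ C` of `z₀`. Dominated convergence concludes.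
-/

open Set MeasureTheory Filter Topology Interval

namespace Real

theorem measurable_sign : Measurable Real.sign :=
  Measurable.ite (measurableSet_lt measurable_id measurable_const) measurable_const
    (Measurable.ite (measurableSet_lt measurable_const measurable_id) measurable_const
      measurable_const)

theorem abs_sign_le_one (r : ℝ) : |sign r| ≤ 1 := by
  rcases sign_apply_eq r with h | h | h <;> simp [h]

theorem continuousAt_sign_of_ne_zero {r : ℝ} (hr : r ≠ 0) : ContinuousAt sign r := by
  suffices sign =ᶠ[𝓝 r] fun _ => sign r from continuousAt_const.congr this.symm
  rcases hr.lt_or_gt with hr | hr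
  · filter_upwards [Iio_mem_nhds hr] with s hs
    rw [sign_of_neg hs, sign_of_neg hr]
  · filter_upwards [Ioi_mem_nhds hr] with s hs
    rw [sign_of_pos hs, sign_of_pos hr]

end Real

theorem norm_add_sign_smul_le {E : Type*} [SeminormedAddCommGroup E] [NormedSpace ℝ E]
    (u v : E) (r : ℝ) : ‖u + Real.sign r • v‖ ≤ ‖u‖ + ‖v‖ :=
  calc ‖u + Real.sign r • v‖ ≤ ‖u‖ + |Real.sign r| * ‖v‖ := by
        simpa only [norm_smul, Real.norm_eq_abs] using norm_add_le u (Real.sign r • v)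
    _ ≤ ‖u‖ + ‖v‖ := by
        gcongr
        exact mul_le_of_le_one_left (norm_nonneg v) (Real.abs_sign_le_one r)

theorem IsCompact.finite_of_forall_dist_lt_imp_eq {X : Type*} [PseudoMetricSpace X] {S : Set X}
    (hS : IsCompact S) (hiso : ∀ x ∈ S, ∃ η > 0, ∀ y ∈ S, dist y x < η → y = x) : S.Finite := by
  choose! η hη_pos hη using hiso
  obtain ⟨t, htS, hcover⟩ :=
    hS.elim_nhds_subcover (fun x => Metric.ball x (η x))
      fun x hx => Metric.ball_mem_nhds x (hη_pos x hx)
  refine t.finite_toSet.subset fun y hy => ?_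
  obtain ⟨x, hx, hyx⟩ := mem_iUnion₂.1 (hcover hy)
  rwa [hη x (htS x hx) y hy hyx]

theorem ContinuousOn.exists_eventually_forall_norm_le {X Y E : Type*} [TopologicalSpace X]
    [LocallyCompactSpace X] [TopologicalSpace Y] [SeminormedAddCommGroup E] {Φ : Y × X → E}
    {K : Set Y} {C : Set X} {x₀ : X} (hΦ : ContinuousOn Φ (K ×ˢ C)) (hK : IsCompact K)
    (hC : C ∈ 𝓝 x₀) : ∃ M, ∀ᶠ x in 𝓝 x₀, ∀ t ∈ K, ‖Φ (t, x)‖ ≤ M := by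
  obtain ⟨L, hL, hLC, hLc⟩ := local_compact_nhds hC
  obtain ⟨M, hM⟩ := (hK.prod hLc).exists_bound_of_continuousOn (hΦ.mono (prod_mono le_rfl hLC))
  exact ⟨M, eventually_of_mem hL fun x hx t ht => hM (t, x) ⟨ht, hx⟩⟩

theorem ContinuousOn.continuous_prodMk_left_of_mem {X Y Z : Type*} [TopologicalSpace X]
    [TopologicalSpace Y] [TopologicalSpace Z] {Φ : Y × X → Z} {C : Set X}
    (hΦ : ContinuousOn Φ (univ ×ˢ C)) {x : X} (hx : x ∈ C) : Continuous fun y => Φ (y, x) :=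
  hΦ.comp_continuous (Continuous.prodMk_left x) fun _ => ⟨trivial, hx⟩

theorem ContinuousOn.continuousAt_prodMk_right_of_mem {X Y Z : Type*} [TopologicalSpace X]
    [TopologicalSpace Y] [TopologicalSpace Z] {Φ : Y × X → Z} {C : Set X}
    (hΦ : ContinuousOn Φ (univ ×ˢ C)) (hC : IsOpen C) (y : Y) {x : X} (hx : x ∈ C) :
    ContinuousAt (fun x => Φ (y, x)) x :=
  (hΦ.continuousAt (prod_mem_nhds univ_mem (hC.mem_nhds hx))).comp
    (Continuous.prodMk_right y).continuousAt

theorem continuousOn_intervalIntegral_add_sign_smul {X E : Type*} [TopologicalSpace X]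
    [FirstCountableTopology X] [LocallyCompactSpace X] [NormedAddCommGroup E] [NormedSpace ℝ E]
    {μ : Measure ℝ} [IsLocallyFiniteMeasure μ] {a b : ℝ} {F₁ F₂ : ℝ → X → E} {h : ℝ → X → ℝ}
    {C : Set X} (hC : IsOpen C)
    (hF₁ : ContinuousOn (fun p : ℝ × X => F₁ p.1 p.2) (univ ×ˢ C))
    (hF₂ : ContinuousOn (fun p : ℝ × X => F₂ p.1 p.2) (univ ×ˢ C))
    (hh : ContinuousOn (fun p : ℝ × X => h p.1 p.2) (univ ×ˢ C))
    (hzero : ∀ z ∈ C, ∀ᵐ t ∂μ, t ∈ Ι a b → h t z ≠ 0) :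
    ContinuousOn (fun z => ∫ t in a..b, F₁ t z + Real.sign (h t z) • F₂ t z ∂μ) C := by
  refine fun z₀ hz₀ => ContinuousAt.continuousWithinAt ?_
  have hC₀ : C ∈ 𝓝 z₀ := hC.mem_nhds hz₀
  have hIcc : uIcc a b ×ˢ C ⊆ univ ×ˢ C := prod_mono (subset_univ _) subset_rfl
  obtain ⟨M₁, hM₁⟩ := (hF₁.mono hIcc).exists_eventually_forall_norm_le isCompact_uIcc hC₀
  obtain ⟨M₂, hM₂⟩ := (hF₂.mono hIcc).exists_eventually_forall_norm_le isCompact_uIcc hC₀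
  refine intervalIntegral.continuousAt_of_dominated_interval (bound := fun _ => M₁ + M₂)
    ?_ ?_ intervalIntegrable_const ?_
  · filter_upwards [hC₀] with z hz
    have hsign : Measurable fun t => Real.sign (h t z) :=
      Real.measurable_sign.comp (hh.continuous_prodMk_left_of_mem hz).measurable
    exact (hF₁.continuous_prodMk_left_of_mem hz).aestronglyMeasurable.add
      (hsign.aestronglyMeasurable.smul (hF₂.continuous_prodMk_left_of_mem hz).aestronglyMeasurable)
  · filter_upwards [hM₁, hM₂] with z hz₁ hz₂
    refine ae_of_all _ fun t ht => (norm_add_sign_smul_le _ _ _).trans ?_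
    exact add_le_add (hz₁ t (uIoc_subset_uIcc ht)) (hz₂ t (uIoc_subset_uIcc ht))
  · filter_upwards [hzero z₀ hz₀] with t ht htI
    have hsign : ContinuousAt (fun z => Real.sign (h t z)) z₀ :=
      (Real.continuousAt_sign_of_ne_zero (ht htI)).comp
        (hh.continuousAt_prodMk_right_of_mem hC t hz₀)
    exact (hF₁.continuousAt_prodMk_right_of_mem hC t hz₀).add
      (hsign.smul (hF₂.continuousAt_prodMk_right_of_mem hC t hz₀))

theorem averaged_function_continuous_general {n : ℕ} (T : ℝ) (hT : 0 < T)
    (D : Set (EuclideanSpace ℝ (Fin n)))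
    (F1 F2 : ℝ → EuclideanSpace ℝ (Fin n) → EuclideanSpace ℝ (Fin n))
    (h : ℝ → EuclideanSpace ℝ (Fin n) → ℝ)
    (hF1c : ContinuousOn (fun p : ℝ × EuclideanSpace ℝ (Fin n) => F1 p.1 p.2) (univ ×ˢ D))
    (hF2c : ContinuousOn (fun p : ℝ × EuclideanSpace ℝ (Fin n) => F2 p.1 p.2) (univ ×ˢ D))
    (hhc : ContinuousOn (fun p : ℝ × EuclideanSpace ℝ (Fin n) => h p.1 p.2) (univ ×ˢ D))
    (C : Set (EuclideanSpace ℝ (Fin n))) (hC : IsOpen C) (hCD : C ⊆ D)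
    (hiso : ∀ z ∈ C, ∀ t₀ ∈ {t ∈ Icc (0 : ℝ) T | h t z = 0}, ∃ η > 0,
      ∀ t ∈ {t ∈ Icc (0 : ℝ) T | h t z = 0}, |t - t₀| < η → t = t₀) :
    ContinuousOn
      (fun z => ∫ t in (0 : ℝ)..T, (F1 t z + Real.sign (h t z) • F2 t z)) C := by
  have hCD' : (univ : Set ℝ) ×ˢ C ⊆ univ ×ˢ D := prod_mono subset_rfl hCD
  refine continuousOn_intervalIntegral_add_sign_smul hC (hF1c.mono hCD') (hF2c.mono hCD')
    (hhc.mono hCD') fun z hz => ?_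
  have hzeros_compact : IsCompact {t ∈ Icc (0 : ℝ) T | h t z = 0} :=
    isCompact_Icc.inter_right
      (isClosed_eq (hhc.continuous_prodMk_left_of_mem (hCD hz)) continuous_const)
  have hzeros_finite := hzeros_compact.finite_of_forall_dist_lt_imp_eq
    (by simpa only [Real.dist_eq] using hiso z hz)
  filter_upwards [measure_eq_zero_iff_ae_notMem.1 (hzeros_finite.measure_zero volume)]
    with t ht htI hzero
  rw [uIoc_of_le hT.le] at htI
  exact ht ⟨Ioc_subset_Icc_self htI, hzero⟩

/-- If `F1`, `F2`, `h` are locally Lipschitz in `x` and for every `z` in the open set `C ⊆ D`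
the map `t ↦ h(t,z)` has only isolated zeros in `[0,T]`, then the averaged function
`f(z) = ∫₀ᵀ (F1(t,z) + sgn(h(t,z)) • F2(t,z)) dt` is continuous on `C`. -/
theorem averaged_function_continuous {n : ℕ} (T : ℝ) (hT : 0 < T)
    (D : Set (EuclideanSpace ℝ (Fin n))) (hD : IsOpen D)
    (F1 F2 : ℝ → EuclideanSpace ℝ (Fin n) → EuclideanSpace ℝ (Fin n))
    (h : ℝ → EuclideanSpace ℝ (Fin n) → ℝ)
    (hF1c : ContinuousOn (fun p : ℝ × EuclideanSpace ℝ (Fin n) => F1 p.1 p.2) (univ ×ˢ D))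
    (hF2c : ContinuousOn (fun p : ℝ × EuclideanSpace ℝ (Fin n) => F2 p.1 p.2) (univ ×ˢ D))
    (hhc : ContinuousOn (fun p : ℝ × EuclideanSpace ℝ (Fin n) => h p.1 p.2) (univ ×ˢ D))
    (hF1per : ∀ t x, F1 (t + T) x = F1 t x)
    (hF2per : ∀ t x, F2 (t + T) x = F2 t x)
    (hhper : ∀ t x, h (t + T) x = h t x)
    (hlipF1 : ∀ x₀ ∈ D, ∃ U ∈ nhds x₀, ∃ L : ℝ, ∀ t : ℝ, ∀ x₁ ∈ U ∩ D, ∀ x₂ ∈ U ∩ D,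
      ‖F1 t x₁ - F1 t x₂‖ ≤ L * ‖x₁ - x₂‖)
    (hlipF2 : ∀ x₀ ∈ D, ∃ U ∈ nhds x₀, ∃ L : ℝ, ∀ t : ℝ, ∀ x₁ ∈ U ∩ D, ∀ x₂ ∈ U ∩ D,
      ‖F2 t x₁ - F2 t x₂‖ ≤ L * ‖x₁ - x₂‖)
    (hliph : ∀ x₀ ∈ D, ∃ U ∈ nhds x₀, ∃ L : ℝ, ∀ t : ℝ, ∀ x₁ ∈ U ∩ D, ∀ x₂ ∈ U ∩ D,
      |h t x₁ - h t x₂| ≤ L * ‖x₁ - x₂‖)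
    (C : Set (EuclideanSpace ℝ (Fin n))) (hC : IsOpen C) (hCD : C ⊆ D)
    (hiso : ∀ z ∈ C, ∀ t₀ ∈ {t ∈ Icc (0 : ℝ) T | h t z = 0}, ∃ η > 0,
      ∀ t ∈ {t ∈ Icc (0 : ℝ) T | h t z = 0}, |t - t₀| < η → t = t₀) :
    ContinuousOn
      (fun z => ∫ t in (0 : ℝ)..T, (F1 t z + Real.sign (h t z) • F2 t z)) C :=
  averaged_function_continuous_general T hT D F1 F2 h hF1c hF2c hhc C hC hCD hiso
end

section
/- Let z₀ ∈ D with μ(A⁰_{z₀}) = 0. Then μ(A⁺_{z₀} ∩ A⁻_z) → 0 and μ(A⁻_{z₀} ∩ A⁺_z) → 0 as z → z₀ in D. -/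
/-!
Write `f = h · z₀`. For `δ > 0` the set `K_δ = {t ∈ [0, T] | δ ≤ f t}` is compact and `h` is
positive on `K_δ × {z₀}`, so by the tube lemma `h · z > 0` on `K_δ` for `z` near `z₀`. Hence
`A⁺_{z₀} ∩ A⁻_z ⊆ {t ∈ [0, T] | 0 < f t < δ}`, whose measure tends to `0` with `δ` by continuity
of the measure along the decreasing family with empty intersection. The other limit is the same
statement for `-h`.
-/

open Set MeasureTheory Filter Topology

theorem tendsto_measure_inter_preimage_Ioo_zero {α : Type*} [MeasurableSpace α] {μ : Measure α}
    {s : Set α} {f : α → ℝ} (hs : NullMeasurableSet s μ) (hμs : μ s ≠ ⊤) (hf : AEMeasurable f μ) :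
    Tendsto (fun δ => μ (s ∩ f ⁻¹' Ioo 0 δ)) (𝓝[>] 0) (𝓝 0) := by
  have hempty : ⋂ δ > (0 : ℝ), s ∩ f ⁻¹' Ioo 0 δ = ∅ := by
    refine eq_empty_of_forall_notMem fun t ht => ?_
    have hft : 0 < f t := (mem_iInter₂.1 ht 1 one_pos).2.1
    exact lt_irrefl _ (mem_iInter₂.1 ht (f t) hft).2.2
  have := tendsto_measure_biInter_gt (μ := μ) (s := fun δ => s ∩ f ⁻¹' Ioo 0 δ) (a := 0)
    (fun δ _ => hs.inter (hf.nullMeasurable measurableSet_Ioo))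
    (fun _ _ _ hδ => inter_subset_inter_right s (preimage_mono (Ioo_subset_Ioo_right hδ)))
    ⟨1, one_pos, ne_top_of_le_ne_top hμs (measure_mono inter_subset_left)⟩
  rwa [hempty, measure_empty] at this

theorem IsCompact.eventually_forall_pos_of_continuousAt {X Z : Type*} [TopologicalSpace X]
    [TopologicalSpace Z] {K : Set X} (hK : IsCompact K) {h : X → Z → ℝ} {z₀ : Z}
    (hc : ∀ t ∈ K, ContinuousAt (fun p : X × Z => h p.1 p.2) (t, z₀))
    (hpos : ∀ t ∈ K, 0 < h t z₀) :
    ∀ᶠ z in 𝓝 z₀, ∀ t ∈ K, 0 < h t z :=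
  hK.eventually_forall_of_forall_eventually fun t ht =>
    (continuous_swap.tendsto (z₀, t)).eventually ((hc t ht).eventually (lt_mem_nhds (hpos t ht)))

theorem tendsto_measure_setOf_pos_inter_setOf_neg {X Z : Type*} [TopologicalSpace X]
    [T2Space X] [MeasurableSpace X] [OpensMeasurableSpace X] [TopologicalSpace Z]
    {μ : Measure X} {s : Set X} (hs : IsCompact s) (hμs : μ s ≠ ⊤) {h : X → Z → ℝ} {z₀ : Z}
    (hc : ∀ t, ContinuousAt (fun p : X × Z => h p.1 p.2) (t, z₀)) :
    Tendsto (fun z => μ ({t ∈ s | 0 < h t z₀} ∩ {t ∈ s | h t z < 0})) (𝓝 z₀) (𝓝 0) := by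
  have hf : Continuous (h · z₀) :=
    continuous_iff_continuousAt.2 fun t => (hc t).comp (f := (·, z₀)) (by fun_prop)
  rw [ENNReal.tendsto_nhds_zero]
  intro ε hε
  obtain ⟨δ, hδε, hδ⟩ : ∃ δ, μ (s ∩ (h · z₀) ⁻¹' Ioo 0 δ) ≤ ε ∧ 0 < δ :=
    (((tendsto_measure_inter_preimage_Ioo_zero hs.nullMeasurableSet hμs
      hf.aemeasurable).eventually_le_const hε).and self_mem_nhdsWithin).exists
  have hK : IsCompact (s ∩ (h · z₀) ⁻¹' Ici δ) := hs.inter_right (isClosed_Ici.preimage hf)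
  filter_upwards [hK.eventually_forall_pos_of_continuousAt (fun t _ => hc t)
    fun t ht => hδ.trans_le ht.2] with z hz
  refine (measure_mono ?_).trans hδε
  rintro t ⟨⟨hts, hpos⟩, -, hneg⟩
  refine ⟨hts, hpos, ?_⟩
  by_contra! hle
  exact (hz t ⟨hts, hle⟩).not_gt hneg

theorem measure_mismatch_tendsto_zero_general {n : ℕ} (T : ℝ)
    (D : Set (EuclideanSpace ℝ (Fin n))) (hD : IsOpen D)
    (h : ℝ → EuclideanSpace ℝ (Fin n) → ℝ)
    (hhc : ContinuousOn (fun p : ℝ × EuclideanSpace ℝ (Fin n) => h p.1 p.2) (univ ×ˢ D))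
    (z₀ : EuclideanSpace ℝ (Fin n)) (hz₀ : z₀ ∈ D) :
    Tendsto (fun z => volume ({t ∈ Icc (0 : ℝ) T | 0 < h t z₀} ∩ {t ∈ Icc (0 : ℝ) T | h t z < 0}))
      (nhdsWithin z₀ D) (nhds 0) ∧
    Tendsto (fun z => volume ({t ∈ Icc (0 : ℝ) T | h t z₀ < 0} ∩ {t ∈ Icc (0 : ℝ) T | 0 < h t z}))
      (nhdsWithin z₀ D) (nhds 0) := by
  have hc : ∀ t, ContinuousAt (fun p : ℝ × EuclideanSpace ℝ (Fin n) => h p.1 p.2) (t, z₀) :=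
    fun t => hhc.continuousAt ((isOpen_univ.prod hD).mem_nhds ⟨mem_univ t, hz₀⟩)
  have hvol : volume (Icc (0 : ℝ) T) ≠ ⊤ := measure_Icc_lt_top.ne
  refine ⟨?_, ?_⟩
  · exact (tendsto_measure_setOf_pos_inter_setOf_neg isCompact_Icc hvol hc).mono_left
      nhdsWithin_le_nhds
  · simpa only [neg_pos, neg_lt_zero] using
      (tendsto_measure_setOf_pos_inter_setOf_neg (h := fun t z => -h t z) isCompact_Icc hvol
        fun t => (hc t).neg).mono_left nhdsWithin_le_nhds

/-- If `μ(A⁰_{z₀}) = 0`, then `μ(A⁺_{z₀} ∩ A⁻_z) → 0` and `μ(A⁻_{z₀} ∩ A⁺_z) → 0`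
as `z → z₀` in `D`. -/
theorem measure_mismatch_tendsto_zero {n : ℕ} (T : ℝ) (hT : 0 < T)
    (D : Set (EuclideanSpace ℝ (Fin n))) (hD : IsOpen D)
    (h : ℝ → EuclideanSpace ℝ (Fin n) → ℝ)
    (hhc : ContinuousOn (fun p : ℝ × EuclideanSpace ℝ (Fin n) => h p.1 p.2) (univ ×ˢ D))
    (hhper : ∀ t x, h (t + T) x = h t x)
    (z₀ : EuclideanSpace ℝ (Fin n)) (hz₀ : z₀ ∈ D)
    (hA0 : volume {t ∈ Icc (0 : ℝ) T | h t z₀ = 0} = 0) :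
    Tendsto (fun z => volume ({t ∈ Icc (0 : ℝ) T | 0 < h t z₀} ∩ {t ∈ Icc (0 : ℝ) T | h t z < 0}))
      (nhdsWithin z₀ D) (nhds 0) ∧
    Tendsto (fun z => volume ({t ∈ Icc (0 : ℝ) T | h t z₀ < 0} ∩ {t ∈ Icc (0 : ℝ) T | 0 < h t z}))
      (nhdsWithin z₀ D) (nhds 0) :=
  measure_mismatch_tendsto_zero_general T D hD h hhc z₀ hz₀
end

section
/- If z ∈ D is such that the map t ↦ h(t,z) has only isolated zeros in [0,T], then f_δ(z) → f(z) as δ → 0⁺. -/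
/-!
The transition function is the clamp `u ↦ max (-1) (min 1 u)`, so `φ (a / δ)` is bounded by `1`
and equals `sgn a` as soon as `0 < δ ≤ |a|`; for `a = 0` both sides vanish. Hence the integrands
of `f_δ(z)` converge pointwise on all of `[0,T]` to that of `f(z)`, dominated by
`‖F1(·,z)‖ + ‖F2(·,z)‖`, and dominated convergence concludes.
-/

open Set Filter Topology MeasureTheory
open scoped Interval

theorem eq_max_neg_one_min_one {φ : ℝ → ℝ}
    (hφ₁ : ∀ u : ℝ, 1 ≤ u → φ u = 1)
    (hφ₂ : ∀ u : ℝ, -1 < u → u < 1 → φ u = u)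
    (hφ₃ : ∀ u : ℝ, u ≤ -1 → φ u = -1) :
    φ = fun u => max (-1) (min 1 u) := by
  funext u
  rcases le_or_gt 1 u with h1 | h1
  · rw [hφ₁ u h1, min_eq_left h1, max_eq_right (by norm_num)]
  rcases le_or_gt u (-1) with h2 | h2
  · rw [hφ₃ u h2, min_eq_right (by linarith), max_eq_left h2]
  · rw [hφ₂ u h2 h1, min_eq_right h1.le, max_eq_right h2.le]

theorem abs_max_neg_one_min_one_le (u : ℝ) : |max (-1) (min 1 u)| ≤ 1 :=
  abs_le.mpr ⟨le_max_left _ _, max_le (by norm_num) (min_le_left _ _)⟩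

theorem tendsto_max_neg_one_min_one_div_nhdsGT_zero (a : ℝ) :
    Tendsto (fun δ => max (-1) (min 1 (a / δ))) (𝓝[>] 0) (𝓝 (Real.sign a)) := by
  have hinv := tendsto_inv_nhdsGT_zero (𝕜 := ℝ)
  rcases lt_trichotomy a 0 with ha | rfl | ha
  · have hbot : Tendsto (fun δ => a / δ) (𝓝[>] 0) atBot := hinv.const_mul_atTop_of_neg ha
    rw [Real.sign_of_neg ha]
    refine tendsto_const_nhds.congr' ?_
    filter_upwards [hbot.eventually_le_atBot (-1)] with δ hδ
    rw [min_eq_right (by linarith), max_eq_left hδ]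
  · simp
  · have htop : Tendsto (fun δ => a / δ) (𝓝[>] 0) atTop := hinv.const_mul_atTop ha
    rw [Real.sign_of_pos ha]
    refine tendsto_const_nhds.congr' ?_
    filter_upwards [htop.eventually_ge_atTop 1] with δ hδ
    rw [min_eq_left hδ, max_eq_right (by norm_num)]

theorem intervalIntegral.tendsto_integral_add_smul_of_tendsto
    {E : Type*} [NormedAddCommGroup E] [NormedSpace ℝ E] {ι : Type*} {l : Filter ι}
    [l.IsCountablyGenerated] {μ : Measure ℝ} {a b C : ℝ} {f g : ℝ → E} {c : ι → ℝ → ℝ}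
    {c₀ : ℝ → ℝ} (hf : IntervalIntegrable f μ a b) (hg : IntervalIntegrable g μ a b)
    (hc_meas : ∀ i, AEStronglyMeasurable (c i) (μ.restrict (Ι a b)))
    (hc_bound : ∀ i t, |c i t| ≤ C) (hc_lim : ∀ t, Tendsto (fun i => c i t) l (𝓝 (c₀ t))) :
    Tendsto (fun i => ∫ t in a..b, f t + c i t • g t ∂μ) l
      (𝓝 (∫ t in a..b, f t + c₀ t • g t ∂μ)) := by
  refine tendsto_integral_filter_of_dominated_convergence (fun t => ‖f t‖ + C * ‖g t‖)
    (.of_forall fun i => hf.def'.aestronglyMeasurable.add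
      ((hc_meas i).smul hg.def'.aestronglyMeasurable))
    (.of_forall fun i => .of_forall fun t _ => ?_) (hf.norm.add (hg.norm.const_mul C))
    (.of_forall fun t _ => tendsto_const_nhds.add ((hc_lim t).smul tendsto_const_nhds))
  calc ‖f t + c i t • g t‖ ≤ ‖f t‖ + |c i t| * ‖g t‖ := by
        simpa [norm_smul] using norm_add_le (f t) (c i t • g t)
    _ ≤ ‖f t‖ + C * ‖g t‖ := by gcongr; exact hc_bound i t

theorem regularized_averaged_tendsto_general {n : ℕ} (T : ℝ)
    (D : Set (EuclideanSpace ℝ (Fin n)))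
    (F1 F2 : ℝ → EuclideanSpace ℝ (Fin n) → EuclideanSpace ℝ (Fin n))
    (h : ℝ → EuclideanSpace ℝ (Fin n) → ℝ)
    (hF1c : ContinuousOn (fun p : ℝ × EuclideanSpace ℝ (Fin n) => F1 p.1 p.2) (univ ×ˢ D))
    (hF2c : ContinuousOn (fun p : ℝ × EuclideanSpace ℝ (Fin n) => F2 p.1 p.2) (univ ×ˢ D))
    (hhc : ContinuousOn (fun p : ℝ × EuclideanSpace ℝ (Fin n) => h p.1 p.2) (univ ×ˢ D))
    (φ : ℝ → ℝ)
    (hφ₁ : ∀ u : ℝ, 1 ≤ u → φ u = 1)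
    (hφ₂ : ∀ u : ℝ, -1 < u → u < 1 → φ u = u)
    (hφ₃ : ∀ u : ℝ, u ≤ -1 → φ u = -1)
    (z : EuclideanSpace ℝ (Fin n)) (hz : z ∈ D) :
    Tendsto (fun δ : ℝ => ∫ t in (0 : ℝ)..T, (F1 t z + φ (h t z / δ) • F2 t z))
      (nhdsWithin 0 (Set.Ioi 0))
      (nhds (∫ t in (0 : ℝ)..T, (F1 t z + Real.sign (h t z) • F2 t z))) := by
  obtain rfl := eq_max_neg_one_min_one hφ₁ hφ₂ hφ₃
  beta_reduce
  have hcurve : Continuous fun t : ℝ => (t, z) := continuous_id.prodMk continuous_const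
  have hmem (t : ℝ) : (t, z) ∈ univ ×ˢ D := ⟨mem_univ t, hz⟩
  have hF1 : Continuous fun t => F1 t z := hF1c.comp_continuous hcurve hmem
  have hF2 : Continuous fun t => F2 t z := hF2c.comp_continuous hcurve hmem
  have hh : Continuous fun t => h t z := hhc.comp_continuous hcurve hmem
  refine intervalIntegral.tendsto_integral_add_smul_of_tendsto (hF1.intervalIntegrable 0 T)
    (hF2.intervalIntegrable 0 T) (fun δ => ?_) (fun δ t => abs_max_neg_one_min_one_le _)
    (fun t => tendsto_max_neg_one_min_one_div_nhdsGT_zero (h t z))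
  exact (continuous_const.max (continuous_const.min (hh.div_const δ))).aestronglyMeasurable

/-- If the map `t ↦ h(t,z)` has only isolated zeros in `[0,T]`, then the regularized averaged
function `f_δ(z) = ∫₀ᵀ (F1(t,z) + φ(h(t,z)/δ) • F2(t,z)) dt` converges, as `δ → 0⁺`, to the
averaged function `f(z) = ∫₀ᵀ (F1(t,z) + sgn(h(t,z)) • F2(t,z)) dt`. -/
theorem regularized_averaged_tendsto {n : ℕ} (T : ℝ) (hT : 0 < T)
    (D : Set (EuclideanSpace ℝ (Fin n))) (hD : IsOpen D)
    (F1 F2 : ℝ → EuclideanSpace ℝ (Fin n) → EuclideanSpace ℝ (Fin n))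
    (h : ℝ → EuclideanSpace ℝ (Fin n) → ℝ)
    (hF1c : ContinuousOn (fun p : ℝ × EuclideanSpace ℝ (Fin n) => F1 p.1 p.2) (univ ×ˢ D))
    (hF2c : ContinuousOn (fun p : ℝ × EuclideanSpace ℝ (Fin n) => F2 p.1 p.2) (univ ×ˢ D))
    (hhc : ContinuousOn (fun p : ℝ × EuclideanSpace ℝ (Fin n) => h p.1 p.2) (univ ×ˢ D))
    (hF1per : ∀ t x, F1 (t + T) x = F1 t x)
    (hF2per : ∀ t x, F2 (t + T) x = F2 t x)
    (hhper : ∀ t x, h (t + T) x = h t x)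
    (φ : ℝ → ℝ)
    (hφ₁ : ∀ u : ℝ, 1 ≤ u → φ u = 1)
    (hφ₂ : ∀ u : ℝ, -1 < u → u < 1 → φ u = u)
    (hφ₃ : ∀ u : ℝ, u ≤ -1 → φ u = -1)
    (z : EuclideanSpace ℝ (Fin n)) (hz : z ∈ D)
    (hiso : ∀ t₀ ∈ {t ∈ Icc (0 : ℝ) T | h t z = 0}, ∃ η > 0,
      ∀ t ∈ {t ∈ Icc (0 : ℝ) T | h t z = 0}, |t - t₀| < η → t = t₀) :
    Tendsto (fun δ : ℝ => ∫ t in (0 : ℝ)..T, (F1 t z + φ (h t z / δ) • F2 t z))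
      (nhdsWithin 0 (Set.Ioi 0))
      (nhds (∫ t in (0 : ℝ)..T, (F1 t z + Real.sign (h t z) • F2 t z))) :=
  regularized_averaged_tendsto_general T D F1 F2 h hF1c hF2c hhc φ hφ₁ hφ₂ hφ₃ z hz
end

section
/- Let K ⊆ ℝ × D be compact. If ∂ₜh(t,x) ≠ 0 for every (t,x) ∈ K ∩ Σ, then there exists ε₀ ∈ (0,1] such that for every ε with |ε| < ε₀ and every (t,x) ∈ K ∩ Σ the Filippov crossing condition holds: ⟨∇h(t,x), X_ε(t,x)⟩ · ⟨∇h(t,x), Y_ε(t,x)⟩ > 0. -/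
open Set RealInnerProductSpace

/-- If `∂ₜh ≠ 0` on `K ∩ Σ` (with `K` compact), then for all sufficiently small `|ε|` the
Filippov crossing condition `⟨∇h, X_ε⟩ ⟨∇h, Y_ε⟩ > 0` holds on `K ∩ Σ`. -/
theorem crossing_from_time_derivative {n : ℕ}
    (D : Set (EuclideanSpace ℝ (Fin n))) (hD : IsOpen D)
    (h ht : ℝ → EuclideanSpace ℝ (Fin n) → ℝ)
    (hx : ℝ → EuclideanSpace ℝ (Fin n) → EuclideanSpace ℝ (Fin n))
    (hder : ∀ t : ℝ, ∀ x ∈ D,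
      HasFDerivAt (fun p : ℝ × EuclideanSpace ℝ (Fin n) => h p.1 p.2)
        ((ht t x) • ContinuousLinearMap.fst ℝ ℝ (EuclideanSpace ℝ (Fin n)) +
          (innerSL ℝ (hx t x)).comp (ContinuousLinearMap.snd ℝ ℝ (EuclideanSpace ℝ (Fin n))))
        (t, x))
    (hhtc : ContinuousOn (fun p : ℝ × EuclideanSpace ℝ (Fin n) => ht p.1 p.2) (univ ×ˢ D))
    (hhxc : ContinuousOn (fun p : ℝ × EuclideanSpace ℝ (Fin n) => hx p.1 p.2) (univ ×ˢ D))
    (F1 F2 : ℝ → EuclideanSpace ℝ (Fin n) → EuclideanSpace ℝ (Fin n))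
    (R1 R2 : ℝ → EuclideanSpace ℝ (Fin n) → ℝ → EuclideanSpace ℝ (Fin n))
    (hF1c : ContinuousOn (fun p : ℝ × EuclideanSpace ℝ (Fin n) => F1 p.1 p.2) (univ ×ˢ D))
    (hF2c : ContinuousOn (fun p : ℝ × EuclideanSpace ℝ (Fin n) => F2 p.1 p.2) (univ ×ˢ D))
    (hR1c : ContinuousOn (fun p : ℝ × EuclideanSpace ℝ (Fin n) × ℝ => R1 p.1 p.2.1 p.2.2)
      (univ ×ˢ D ×ˢ Icc (-1 : ℝ) 1))
    (hR2c : ContinuousOn (fun p : ℝ × EuclideanSpace ℝ (Fin n) × ℝ => R2 p.1 p.2.1 p.2.2)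
      (univ ×ˢ D ×ˢ Icc (-1 : ℝ) 1))
    (K : Set (ℝ × EuclideanSpace ℝ (Fin n))) (hK : IsCompact K) (hKD : K ⊆ univ ×ˢ D)
    (hKt : ∀ p ∈ K, h p.1 p.2 = 0 → ht p.1 p.2 ≠ 0) :
    ∃ ε₀ ∈ Ioc (0 : ℝ) 1, ∀ ε : ℝ, |ε| < ε₀ → ∀ p ∈ K, h p.1 p.2 = 0 →
      0 < (ht p.1 p.2 +
            ⟪hx p.1 p.2, ε • (F1 p.1 p.2 + F2 p.1 p.2) + ε ^ 2 • (R1 p.1 p.2 ε + R2 p.1 p.2 ε)⟫) *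
          (ht p.1 p.2 +
            ⟪hx p.1 p.2, ε • (F1 p.1 p.2 - F2 p.1 p.2) + ε ^ 2 • (R1 p.1 p.2 ε - R2 p.1 p.2 ε)⟫) := by
  classical
  set S : Set (ℝ × EuclideanSpace ℝ (Fin n)) := {p | p ∈ K ∧ h p.1 p.2 = 0} with hSdef
  have hSK : S ⊆ K := fun p hp => hp.1
  have hSD : S ⊆ univ ×ˢ D := fun p hp => hKD hp.1
  have hScl : IsClosed S := by
    refine isClosed_of_closure_subset ?_
    intro p hp
    have hpK : p ∈ K := hK.isClosed.closure_subset (closure_mono hSK hp)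
    refine ⟨hpK, ?_⟩
    have h1 : Filter.Tendsto (fun q : ℝ × EuclideanSpace ℝ (Fin n) => h q.1 q.2)
        (nhdsWithin p S) (nhds (h p.1 p.2)) :=
      ((hder p.1 p.2 (hKD hpK).2).continuousAt).continuousWithinAt
    have h2 : Filter.Tendsto (fun q : ℝ × EuclideanSpace ℝ (Fin n) => h q.1 q.2)
        (nhdsWithin p S) (nhds 0) := by
      refine Filter.Tendsto.congr' ?_ tendsto_const_nhds
      exact Filter.eventuallyEq_of_mem self_mem_nhdsWithin fun q hq => (hq.2).symm
    have : (nhdsWithin p S).NeBot := mem_closure_iff_nhdsWithin_neBot.mp hp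
    exact tendsto_nhds_unique h1 h2
  have hS : IsCompact S := hK.of_isClosed_subset hScl hSK
  by_cases hne : S.Nonempty
  · -- min of |ht| on S
    obtain ⟨p₀, hp₀S, hp₀min⟩ := hS.exists_isMinOn hne ((hhtc.mono hSD).abs)
    set c : ℝ := |ht p₀.1 p₀.2| with hc
    have hcpos : 0 < c := abs_pos.mpr (hKt p₀ hp₀S.1 hp₀S.2)
    -- bounds
    obtain ⟨M1, hM1⟩ := hS.exists_bound_of_continuousOn (hhxc.mono hSD)
    obtain ⟨M2, hM2⟩ := hS.exists_bound_of_continuousOn (hF1c.mono hSD)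
    obtain ⟨M3, hM3⟩ := hS.exists_bound_of_continuousOn (hF2c.mono hSD)
    have hSI : IsCompact (S ×ˢ Icc (-1 : ℝ) 1) := hS.prod isCompact_Icc
    have hre : Continuous fun q : (ℝ × EuclideanSpace ℝ (Fin n)) × ℝ =>
        (q.1.1, q.1.2, q.2) := by fun_prop
    have hmapsto : ∀ q ∈ S ×ˢ Icc (-1 : ℝ) 1,
        (q.1.1, q.1.2, q.2) ∈ (univ ×ˢ D ×ˢ Icc (-1 : ℝ) 1 :
          Set (ℝ × EuclideanSpace ℝ (Fin n) × ℝ)) := by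
      intro q hq
      exact ⟨trivial, (hSD hq.1).2, hq.2⟩
    obtain ⟨M4, hM4⟩ := hSI.exists_bound_of_continuousOn
      (hR1c.comp hre.continuousOn hmapsto)
    obtain ⟨M5, hM5⟩ := hSI.exists_bound_of_continuousOn
      (hR2c.comp hre.continuousOn hmapsto)
    set M : ℝ := max M1 (max M2 (max M3 (max M4 (max M5 0)))) with hM
    have hM0 : 0 ≤ M := le_trans (le_max_right M5 0)
      (le_trans (le_max_right M4 _) (le_trans (le_max_right M3 _)
        (le_trans (le_max_right M2 _) (le_max_right M1 _))))
    have hM1' : ∀ p ∈ S, ‖hx p.1 p.2‖ ≤ M := fun p hp =>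
      (hM1 p hp).trans (le_max_left _ _)
    have hM2' : ∀ p ∈ S, ‖F1 p.1 p.2‖ ≤ M := fun p hp =>
      (hM2 p hp).trans ((le_max_left _ _).trans (le_max_right _ _))
    have hM3' : ∀ p ∈ S, ‖F2 p.1 p.2‖ ≤ M := fun p hp =>
      (hM3 p hp).trans ((le_max_left _ _).trans ((le_max_right _ _).trans (le_max_right _ _)))
    have hM4' : ∀ p ∈ S, ∀ ε ∈ Icc (-1 : ℝ) 1, ‖R1 p.1 p.2 ε‖ ≤ M := by
      intro p hp ε hε
      have := hM4 (p, ε) ⟨hp, hε⟩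
      calc ‖R1 p.1 p.2 ε‖ ≤ M4 := this
        _ ≤ M := (le_max_left M4 _).trans
          ((le_max_right _ _).trans ((le_max_right _ _).trans (le_max_right _ _)))
    have hM5' : ∀ p ∈ S, ∀ ε ∈ Icc (-1 : ℝ) 1, ‖R2 p.1 p.2 ε‖ ≤ M := by
      intro p hp ε hε
      have := hM5 (p, ε) ⟨hp, hε⟩
      calc ‖R2 p.1 p.2 ε‖ ≤ M5 := this
        _ ≤ M := (le_max_left M5 0).trans ((le_max_right M4 _).trans
          ((le_max_right _ _).trans ((le_max_right _ _).trans (le_max_right _ _))))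
    refine ⟨min 1 (c / (4 * M ^ 2 + 1)), ⟨lt_min one_pos (by positivity), min_le_left _ _⟩,
      ?_⟩
    intro ε hε p hpK hp0
    have hpS : p ∈ S := ⟨hpK, hp0⟩
    have hε1 : |ε| ≤ 1 := le_of_lt (lt_of_lt_of_le hε (min_le_left _ _))
    have hεI : ε ∈ Icc (-1 : ℝ) 1 := abs_le.mp hε1
    have hεc : |ε| * (4 * M ^ 2 + 1) < c := by
      have h1 : |ε| < c / (4 * M ^ 2 + 1) := lt_of_lt_of_le hε (min_le_right _ _)
      have h2 : (0 : ℝ) < 4 * M ^ 2 + 1 := by positivity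
      calc |ε| * (4 * M ^ 2 + 1) < c / (4 * M ^ 2 + 1) * (4 * M ^ 2 + 1) := by
            exact mul_lt_mul_of_pos_right h1 h2
        _ = c := div_mul_cancel₀ c (ne_of_gt h2)
    have key : ∀ v w : EuclideanSpace ℝ (Fin n), ‖v‖ ≤ 2 * M → ‖w‖ ≤ 2 * M →
        |⟪hx p.1 p.2, ε • v + ε ^ 2 • w⟫| ≤ |ε| * (4 * M ^ 2) := by
      intro v w hv hw
      have h1 : |⟪hx p.1 p.2, ε • v + ε ^ 2 • w⟫| ≤ ‖hx p.1 p.2‖ * ‖ε • v + ε ^ 2 • w‖ :=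
        abs_real_inner_le_norm _ _
      have h2 : ‖ε • v + ε ^ 2 • w‖ ≤ |ε| * ‖v‖ + ε ^ 2 * ‖w‖ := by
        calc ‖ε • v + ε ^ 2 • w‖ ≤ ‖ε • v‖ + ‖ε ^ 2 • w‖ := norm_add_le _ _
          _ = |ε| * ‖v‖ + ε ^ 2 * ‖w‖ := by
            rw [norm_smul, norm_smul, Real.norm_eq_abs, Real.norm_eq_abs, abs_pow, sq_abs]
      have hε2 : ε ^ 2 ≤ |ε| := by nlinarith [abs_nonneg ε, sq_abs ε]
      have hxM : ‖hx p.1 p.2‖ ≤ M := hM1' p hpS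
      have h3 : |ε| * ‖v‖ + ε ^ 2 * ‖w‖ ≤ |ε| * (4 * M) := by
        nlinarith [mul_le_mul_of_nonneg_left hv (abs_nonneg ε),
          mul_le_mul_of_nonneg_right hε2 (norm_nonneg w),
          mul_le_mul_of_nonneg_left hw (abs_nonneg ε)]
      calc |⟪hx p.1 p.2, ε • v + ε ^ 2 • w⟫| ≤ ‖hx p.1 p.2‖ * ‖ε • v + ε ^ 2 • w‖ := h1
        _ ≤ M * (|ε| * (4 * M)) :=
          mul_le_mul hxM (h2.trans h3) (norm_nonneg _) hM0
        _ = |ε| * (4 * M ^ 2) := by ring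
    have hvA : ‖F1 p.1 p.2 + F2 p.1 p.2‖ ≤ 2 * M := by
      calc ‖F1 p.1 p.2 + F2 p.1 p.2‖ ≤ ‖F1 p.1 p.2‖ + ‖F2 p.1 p.2‖ := norm_add_le _ _
        _ ≤ 2 * M := by linarith [hM2' p hpS, hM3' p hpS]
    have hvB : ‖F1 p.1 p.2 - F2 p.1 p.2‖ ≤ 2 * M := by
      calc ‖F1 p.1 p.2 - F2 p.1 p.2‖ ≤ ‖F1 p.1 p.2‖ + ‖F2 p.1 p.2‖ := norm_sub_le _ _
        _ ≤ 2 * M := by linarith [hM2' p hpS, hM3' p hpS]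
    have hwA : ‖R1 p.1 p.2 ε + R2 p.1 p.2 ε‖ ≤ 2 * M := by
      calc ‖R1 p.1 p.2 ε + R2 p.1 p.2 ε‖ ≤ ‖R1 p.1 p.2 ε‖ + ‖R2 p.1 p.2 ε‖ := norm_add_le _ _
        _ ≤ 2 * M := by linarith [hM4' p hpS ε hεI, hM5' p hpS ε hεI]
    have hwB : ‖R1 p.1 p.2 ε - R2 p.1 p.2 ε‖ ≤ 2 * M := by
      calc ‖R1 p.1 p.2 ε - R2 p.1 p.2 ε‖ ≤ ‖R1 p.1 p.2 ε‖ + ‖R2 p.1 p.2 ε‖ := norm_sub_le _ _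
        _ ≤ 2 * M := by linarith [hM4' p hpS ε hεI, hM5' p hpS ε hεI]
    have hA := key _ _ hvA hwA
    have hB := key _ _ hvB hwB
    have hAc : |⟪hx p.1 p.2, ε • (F1 p.1 p.2 + F2 p.1 p.2)
        + ε ^ 2 • (R1 p.1 p.2 ε + R2 p.1 p.2 ε)⟫| < c := by
      refine lt_of_le_of_lt hA ?_
      nlinarith [abs_nonneg ε]
    have hBc : |⟪hx p.1 p.2, ε • (F1 p.1 p.2 - F2 p.1 p.2)
        + ε ^ 2 • (R1 p.1 p.2 ε - R2 p.1 p.2 ε)⟫| < c := by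
      refine lt_of_le_of_lt hB ?_
      nlinarith [abs_nonneg ε]
    have hac : c ≤ |ht p.1 p.2| := hp₀min hpS
    set a := ht p.1 p.2
    set A := ⟪hx p.1 p.2, ε • (F1 p.1 p.2 + F2 p.1 p.2)
      + ε ^ 2 • (R1 p.1 p.2 ε + R2 p.1 p.2 ε)⟫
    set B := ⟪hx p.1 p.2, ε • (F1 p.1 p.2 - F2 p.1 p.2)
      + ε ^ 2 • (R1 p.1 p.2 ε - R2 p.1 p.2 ε)⟫
    obtain ⟨hA1, hA2⟩ := abs_lt.mp hAc
    obtain ⟨hB1, hB2⟩ := abs_lt.mp hBc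
    rcases lt_or_ge a 0 with ha | ha
    · have hac' : a ≤ -c := by
        have : |a| = -a := abs_of_neg ha
        linarith
      exact mul_pos_of_neg_of_neg (by linarith) (by linarith)
    · have hac' : c ≤ a := by
        have : |a| = a := abs_of_nonneg ha
        linarith
      exact mul_pos (by linarith) (by linarith)
  · refine ⟨1, ⟨one_pos, le_refl 1⟩, ?_⟩
    intro ε hε p hpK hp0
    exact absurd ⟨hpK, hp0⟩ (fun hmem => hne ⟨p, hmem⟩)
end

section
/- Let K ⊆ ℝ × D be compact and suppose K ∩ Σ = A ∪ B, where A is compact with ∂ₜh(t,x) ≠ 0 for all (t,x) ∈ A, and there is a continuous function ξ : ℝ × D → ℝ with ξ(t,x) > 0 for all (t,x) ∈ K such that for every (t,x) ∈ B and every ε ∈ (0,1]: ∂ₜh(t,x)·⟨∂ₓh(t,x), F1(t,x)⟩ + ε·(⟨∂ₓh(t,x), F1(t,x)⟩² − ⟨∂ₓh(t,x), F2(t,x)⟩²)/2 ≥ ε·ξ(t,x). Then there exists ε̄ ∈ (0,1] such that for every ε ∈ (0, ε̄) and every (t,x) ∈ K ∩ Σ one has ⟨∇h(t,x), X_ε(t,x)⟩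 · ⟨∇h(t,x), Y_ε(t,x)⟩ > 0. -/
open Set RealInnerProductSpace

set_option maxHeartbeats 1000000 in
lemma crossing_auxA (M a u v r s δ ε : ℝ) (hM1 : 1 ≤ M) (hε0 : 0 < ε) (hε1 : ε ≤ 1)
    (huM : |u| ≤ M ^ 2) (hvM : |v| ≤ M ^ 2) (hrM : |r| ≤ M ^ 2) (hsM : |s| ≤ M ^ 2)
    (haM : |a| ≤ M) (hδpos : 0 < δ) (hδa : δ ≤ |a|)
    (hεδ : ε * (25 * M ^ 4) < δ ^ 2) :
    0 < (a + (ε * u + ε * v + ε ^ 2 * r + ε ^ 2 * s)) *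
      (a + (ε * u - ε * v + ε ^ 2 * r - ε ^ 2 * s)) := by
  obtain ⟨hu1, hu2⟩ := abs_le.mp huM
  obtain ⟨hv1, hv2⟩ := abs_le.mp hvM
  obtain ⟨hr1, hr2⟩ := abs_le.mp hrM
  obtain ⟨hs1, hs2⟩ := abs_le.mp hsM
  obtain ⟨ha1, ha2⟩ := abs_le.mp haM
  have hδa2 : δ ^ 2 ≤ a ^ 2 := by
    have h1 := pow_le_pow_left₀ hδpos.le hδa 2
    rwa [sq_abs] at h1
  have hε2 : ε ^ 2 ≤ ε := by
    have := pow_le_pow_of_le_one hε0.le hε1 (show 1 ≤ 2 by norm_num)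
    simpa using this
  set X : ℝ := ε * u + ε * v + ε ^ 2 * r + ε ^ 2 * s with hX_def
  set Y : ℝ := ε * u - ε * v + ε ^ 2 * r - ε ^ 2 * s with hY_def
  have hb1 : ∀ z : ℝ, -(M ^ 2) ≤ z → z ≤ M ^ 2 →
      -(ε * M ^ 2) ≤ ε * z ∧ ε * z ≤ ε * M ^ 2 := by
    intro z h1 h2
    constructor <;> nlinarith
  have hb2 : ∀ z : ℝ, -(M ^ 2) ≤ z → z ≤ M ^ 2 →
      -(ε * M ^ 2) ≤ ε ^ 2 * z ∧ ε ^ 2 * z ≤ ε * M ^ 2 := by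
    intro z h1 h2
    constructor <;> nlinarith [sq_nonneg ε]
  obtain ⟨hbu1, hbu2⟩ := hb1 u hu1 hu2
  obtain ⟨hbv1, hbv2⟩ := hb1 v hv1 hv2
  obtain ⟨hbr1, hbr2⟩ := hb2 r hr1 hr2
  obtain ⟨hbs1, hbs2⟩ := hb2 s hs1 hs2
  have hXub : X ≤ 4 * (ε * M ^ 2) := by rw [hX_def]; linarith
  have hXlb : -(4 * (ε * M ^ 2)) ≤ X := by rw [hX_def]; linarith
  have hYub : Y ≤ 4 * (ε * M ^ 2) := by rw [hY_def]; linarith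
  have hYlb : -(4 * (ε * M ^ 2)) ≤ Y := by rw [hY_def]; linarith
  have hXY1 : 0 ≤ (M - a) * (8 * (ε * M ^ 2) - (X + Y)) :=
    mul_nonneg (by linarith) (by linarith)
  have hXY2 : 0 ≤ (M + a) * (8 * (ε * M ^ 2) + (X + Y)) :=
    mul_nonneg (by linarith) (by linarith)
  have hXY3 : 0 ≤ (4 * (ε * M ^ 2) + X) * (4 * (ε * M ^ 2) + Y) :=
    mul_nonneg (by linarith) (by linarith)
  have hXY4 : 0 ≤ (4 * (ε * M ^ 2) - X) * (4 * (ε * M ^ 2) - Y) :=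
    mul_nonneg (by linarith) (by linarith)
  have hM34 : M ^ 3 ≤ M ^ 4 := pow_le_pow_right₀ hM1 (by norm_num)
  have hεM : ε ^ 2 * M ^ 4 ≤ ε * M ^ 4 :=
    mul_le_mul_of_nonneg_right hε2 (by positivity)
  have hεM4 : 0 < ε * M ^ 4 := by positivity
  nlinarith [hXY1, hXY2, hXY3, hXY4, hδa2, hεδ, hM34, hεM, hεM4,
    mul_le_mul_of_nonneg_left hM34 hε0.le]

set_option maxHeartbeats 1000000 in
lemma crossing_auxB (M a u v r s ξ0 ε : ℝ) (hM1 : 1 ≤ M) (hε0 : 0 < ε) (hε1 : ε ≤ 1)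
    (huM : |u| ≤ M ^ 2) (hvM : |v| ≤ M ^ 2) (hrM : |r| ≤ M ^ 2) (hsM : |s| ≤ M ^ 2)
    (hξ0pos : 0 < ξ0)
    (hq : ε * ξ0 ≤ a * u + ε * ((u ^ 2 - v ^ 2) / 2))
    (hεξ : ε * (4 * M ^ 4) < ξ0) :
    0 < (a + (ε * u + ε * v + ε ^ 2 * r + ε ^ 2 * s)) *
      (a + (ε * u - ε * v + ε ^ 2 * r - ε ^ 2 * s)) := by
  obtain ⟨hu1, hu2⟩ := abs_le.mp huM
  obtain ⟨hv1, hv2⟩ := abs_le.mp hvM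
  obtain ⟨hr1, hr2⟩ := abs_le.mp hrM
  obtain ⟨hs1, hs2⟩ := abs_le.mp hsM
  have key : 2 * ε ^ 2 * ξ0 ≤ 2 * ε * (a * u) + ε ^ 2 * (u ^ 2 - v ^ 2) := by
    nlinarith [mul_le_mul_of_nonneg_left hq (by positivity : (0:ℝ) ≤ 2 * ε)]
  have hru2 : r ^ 2 ≤ M ^ 4 := by nlinarith [sq_abs r, abs_nonneg r]
  have hsu2 : s ^ 2 ≤ M ^ 4 := by nlinarith [sq_abs s, abs_nonneg s]
  have huu2 : u ^ 2 ≤ M ^ 4 := by nlinarith [sq_abs u, abs_nonneg u]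
  have hvv2 : v ^ 2 ≤ M ^ 4 := by nlinarith [sq_abs v, abs_nonneg v]
  have hε43 : ε ^ 4 ≤ ε ^ 3 := pow_le_pow_of_le_one hε0.le hε1 (by norm_num)
  have hε3nn : (0 : ℝ) ≤ ε ^ 3 := by positivity
  have expand : (a + (ε * u + ε * v + ε ^ 2 * r + ε ^ 2 * s)) *
      (a + (ε * u - ε * v + ε ^ 2 * r - ε ^ 2 * s)) =
      a ^ 2 + (2 * ε * (a * u) + ε ^ 2 * (u ^ 2 - v ^ 2)) + 2 * ε ^ 2 * (a * r) +
        2 * ε ^ 3 * (u * r) - 2 * ε ^ 3 * (v * s) + ε ^ 4 * (r ^ 2 - s ^ 2) := by ring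
  rw [expand]
  have t1 : -(ε ^ 3 * M ^ 4) ≤ a ^ 2 + 2 * ε ^ 2 * (a * r) := by
    nlinarith [sq_nonneg (a + ε ^ 2 * r), mul_le_mul hε43 hru2 (sq_nonneg r) hε3nn]
  have t2 : -(2 * ε ^ 3 * M ^ 4) ≤ 2 * ε ^ 3 * (u * r) := by
    have h1 : -(2 * M ^ 4) ≤ 2 * (u * r) := by nlinarith [sq_nonneg (u + r)]
    nlinarith [mul_le_mul_of_nonneg_left h1 hε3nn]
  have t3 : -(2 * ε ^ 3 * M ^ 4) ≤ -(2 * ε ^ 3 * (v * s)) := by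
    have h1 : 2 * (v * s) ≤ 2 * M ^ 4 := by nlinarith [sq_nonneg (v - s)]
    nlinarith [mul_le_mul_of_nonneg_left h1 hε3nn]
  have t4 : -(ε ^ 3 * M ^ 4) ≤ ε ^ 4 * (r ^ 2 - s ^ 2) := by
    nlinarith [mul_le_mul hε43 hsu2 (sq_nonneg s) hε3nn, sq_nonneg (ε ^ 2 * r)]
  have hεξ2 : ε ^ 2 * (ε * (4 * M ^ 4)) < ε ^ 2 * ξ0 :=
    mul_lt_mul_of_pos_left hεξ (by positivity)
  nlinarith [key, t1, t2, t3, t4, hεξ2]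


set_option maxHeartbeats 1000000 in
/-- If `K ∩ Σ = A ∪ B` where `∂ₜh ≠ 0` on the compact set `A`, and on `B` the quantity
`∂ₜh ⟨∂ₓh, F1⟩ + ε (⟨∂ₓh, F1⟩² − ⟨∂ₓh, F2⟩²)/2` is bounded below by `ε ξ` for a continuous
function `ξ > 0` on `K`, then for all sufficiently small `ε > 0` the Filippov crossing
condition `⟨∇h, X_ε⟩ ⟨∇h, Y_ε⟩ > 0` holds on `K ∩ Σ`. -/
theorem crossing_from_mixed_condition {n : ℕ}
    (D : Set (EuclideanSpace ℝ (Fin n))) (hD : IsOpen D)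
    (h ht : ℝ → EuclideanSpace ℝ (Fin n) → ℝ)
    (hx : ℝ → EuclideanSpace ℝ (Fin n) → EuclideanSpace ℝ (Fin n))
    (hder : ∀ t : ℝ, ∀ x ∈ D,
      HasFDerivAt (fun p : ℝ × EuclideanSpace ℝ (Fin n) => h p.1 p.2)
        ((ht t x) • ContinuousLinearMap.fst ℝ ℝ (EuclideanSpace ℝ (Fin n)) +
          (innerSL ℝ (hx t x)).comp (ContinuousLinearMap.snd ℝ ℝ (EuclideanSpace ℝ (Fin n))))
        (t, x))
    (hhtc : ContinuousOn (fun p : ℝ × EuclideanSpace ℝ (Fin n) => ht p.1 p.2) (univ ×ˢ D))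
    (hhxc : ContinuousOn (fun p : ℝ × EuclideanSpace ℝ (Fin n) => hx p.1 p.2) (univ ×ˢ D))
    (F1 F2 : ℝ → EuclideanSpace ℝ (Fin n) → EuclideanSpace ℝ (Fin n))
    (R1 R2 : ℝ → EuclideanSpace ℝ (Fin n) → ℝ → EuclideanSpace ℝ (Fin n))
    (hF1c : ContinuousOn (fun p : ℝ × EuclideanSpace ℝ (Fin n) => F1 p.1 p.2) (univ ×ˢ D))
    (hF2c : ContinuousOn (fun p : ℝ × EuclideanSpace ℝ (Fin n) => F2 p.1 p.2) (univ ×ˢ D))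
    (hR1c : ContinuousOn (fun p : ℝ × EuclideanSpace ℝ (Fin n) × ℝ => R1 p.1 p.2.1 p.2.2)
      (univ ×ˢ D ×ˢ Icc (-1 : ℝ) 1))
    (hR2c : ContinuousOn (fun p : ℝ × EuclideanSpace ℝ (Fin n) × ℝ => R2 p.1 p.2.1 p.2.2)
      (univ ×ˢ D ×ˢ Icc (-1 : ℝ) 1))
    (K : Set (ℝ × EuclideanSpace ℝ (Fin n))) (hK : IsCompact K) (hKD : K ⊆ univ ×ˢ D)
    (A B : Set (ℝ × EuclideanSpace ℝ (Fin n)))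
    (hAB : {p ∈ K | h p.1 p.2 = 0} = A ∪ B)
    (hA : IsCompact A)
    (hAt : ∀ p ∈ A, ht p.1 p.2 ≠ 0)
    (ξ : ℝ × EuclideanSpace ℝ (Fin n) → ℝ)
    (hξc : ContinuousOn ξ (univ ×ˢ D))
    (hξpos : ∀ p ∈ K, 0 < ξ p)
    (hB : ∀ p ∈ B, ∀ ε ∈ Ioc (0 : ℝ) 1,
      ε * ξ p ≤ ht p.1 p.2 * ⟪hx p.1 p.2, F1 p.1 p.2⟫ +
        ε * ((⟪hx p.1 p.2, F1 p.1 p.2⟫ ^ 2 - ⟪hx p.1 p.2, F2 p.1 p.2⟫ ^ 2) / 2)) :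
    ∃ εbar ∈ Ioc (0 : ℝ) 1, ∀ ε ∈ Ioo (0 : ℝ) εbar, ∀ p ∈ K, h p.1 p.2 = 0 →
      0 < (ht p.1 p.2 +
            ⟪hx p.1 p.2, ε • (F1 p.1 p.2 + F2 p.1 p.2) + ε ^ 2 • (R1 p.1 p.2 ε + R2 p.1 p.2 ε)⟫) *
          (ht p.1 p.2 +
            ⟪hx p.1 p.2, ε • (F1 p.1 p.2 - F2 p.1 p.2) + ε ^ 2 • (R1 p.1 p.2 ε - R2 p.1 p.2 ε)⟫) := by
  classical
  -- bounds on the various continuous functions on the compact set K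
  obtain ⟨C1, hC1⟩ := hK.exists_bound_of_continuousOn (hhtc.mono hKD)
  obtain ⟨C2, hC2⟩ := hK.exists_bound_of_continuousOn (hhxc.mono hKD)
  obtain ⟨C3, hC3⟩ := hK.exists_bound_of_continuousOn (hF1c.mono hKD)
  obtain ⟨C4, hC4⟩ := hK.exists_bound_of_continuousOn (hF2c.mono hKD)
  have hKI : IsCompact (K ×ˢ Icc (-1 : ℝ) 1) := hK.prod isCompact_Icc
  have hcont : Continuous (fun q : (ℝ × EuclideanSpace ℝ (Fin n)) × ℝ =>
      (q.1.1, q.1.2, q.2)) := by fun_prop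
  have hmap : MapsTo (fun q : (ℝ × EuclideanSpace ℝ (Fin n)) × ℝ => (q.1.1, q.1.2, q.2))
      (K ×ˢ Icc (-1 : ℝ) 1) (univ ×ˢ D ×ˢ Icc (-1 : ℝ) 1) := by
    rintro ⟨⟨t, x⟩, e⟩ ⟨hq1, hq2⟩
    exact ⟨trivial, (hKD hq1).2, hq2⟩
  obtain ⟨C5, hC5⟩ := hKI.exists_bound_of_continuousOn
    (hR1c.comp hcont.continuousOn hmap)
  obtain ⟨C6, hC6⟩ := hKI.exists_bound_of_continuousOn
    (hR2c.comp hcont.continuousOn hmap)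
  set M : ℝ := max 1 (max C1 (max C2 (max C3 (max C4 (max C5 C6))))) with hMdef
  have hM1 : (1 : ℝ) ≤ M := le_max_left _ _
  have hM0 : (0 : ℝ) < M := lt_of_lt_of_le one_pos hM1
  have hC1M : C1 ≤ M := le_max_of_le_right (le_max_left _ _)
  have hC2M : C2 ≤ M := le_max_of_le_right (le_max_of_le_right (le_max_left _ _))
  have hC3M : C3 ≤ M :=
    le_max_of_le_right (le_max_of_le_right (le_max_of_le_right (le_max_left _ _)))
  have hC4M : C4 ≤ M :=
    le_max_of_le_right (le_max_of_le_right (le_max_of_le_right (le_max_of_le_right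
      (le_max_left _ _))))
  have hC5M : C5 ≤ M :=
    le_max_of_le_right (le_max_of_le_right (le_max_of_le_right (le_max_of_le_right
      (le_max_of_le_right (le_max_left _ _)))))
  have hC6M : C6 ≤ M :=
    le_max_of_le_right (le_max_of_le_right (le_max_of_le_right (le_max_of_le_right
      (le_max_of_le_right (le_max_right _ _)))))
  -- positive lower bound for ξ on K
  obtain ⟨ξ0, hξ0pos, hξ0⟩ : ∃ ξ0 > 0, ∀ p ∈ K, ξ0 ≤ ξ p := by
    rcases K.eq_empty_or_nonempty with hKe | hKne
    · exact ⟨1, one_pos, by simp [hKe]⟩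
    · obtain ⟨p0, hp0K, hp0min⟩ := hK.exists_isMinOn hKne (hξc.mono hKD)
      exact ⟨ξ p0, hξpos p0 hp0K, fun p hp => hp0min hp⟩
  -- A ⊆ K, B ⊆ K
  have hAsub : A ⊆ K := by
    intro p hp
    have hmem : p ∈ A ∪ B := Or.inl hp
    rw [← hAB] at hmem
    exact hmem.1
  have hBsub : B ⊆ K := by
    intro p hp
    have hmem : p ∈ A ∪ B := Or.inr hp
    rw [← hAB] at hmem
    exact hmem.1
  -- positive lower bound for |ht| on A
  obtain ⟨δ, hδpos, hδ⟩ : ∃ δ > 0, ∀ p ∈ A, δ ≤ |ht p.1 p.2| := by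
    rcases A.eq_empty_or_nonempty with hAe | hAne
    · exact ⟨1, one_pos, by simp [hAe]⟩
    · obtain ⟨p0, hp0A, hp0min⟩ := hA.exists_isMinOn hAne
        ((hhtc.mono (hAsub.trans hKD)).abs)
      exact ⟨|ht p0.1 p0.2|, abs_pos.mpr (hAt p0 hp0A), fun p hp => hp0min hp⟩
  refine ⟨min 1 (min (δ ^ 2 / (25 * M ^ 4)) (ξ0 / (4 * M ^ 4))), ⟨?_, min_le_left _ _⟩, ?_⟩
  · exact lt_min one_pos (lt_min (by positivity) (by positivity))
  intro ε hε p hpK hph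
  obtain ⟨hε0, hεlt⟩ := hε
  have hε1 : ε ≤ 1 := le_of_lt (lt_of_lt_of_le hεlt (min_le_left _ _))
  have hεδ : ε * (25 * M ^ 4) < δ ^ 2 := by
    have := lt_of_lt_of_le hεlt (le_trans (min_le_right _ _) (min_le_left _ _))
    exact (lt_div_iff₀ (by positivity)).mp this
  have hεξ : ε * (4 * M ^ 4) < ξ0 := by
    have := lt_of_lt_of_le hεlt (le_trans (min_le_right _ _) (min_le_right _ _))
    exact (lt_div_iff₀ (by positivity)).mp this
  -- membership in A ∪ B
  have hpmem : p ∈ A ∪ B := by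
    rw [← hAB]; exact ⟨hpK, hph⟩
  -- abbreviations
  set a : ℝ := ht p.1 p.2 with ha_def
  set w : EuclideanSpace ℝ (Fin n) := hx p.1 p.2 with hw_def
  set u : ℝ := ⟪w, F1 p.1 p.2⟫ with hu_def
  set v : ℝ := ⟪w, F2 p.1 p.2⟫ with hv_def
  set r : ℝ := ⟪w, R1 p.1 p.2 ε⟫ with hr_def
  set s : ℝ := ⟪w, R2 p.1 p.2 ε⟫ with hs_def
  -- rewrite the inner products
  have e1 : ⟪hx p.1 p.2, ε • (F1 p.1 p.2 + F2 p.1 p.2) +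
      ε ^ 2 • (R1 p.1 p.2 ε + R2 p.1 p.2 ε)⟫ = ε * u + ε * v + ε ^ 2 * r + ε ^ 2 * s := by
    rw [inner_add_right, real_inner_smul_right, real_inner_smul_right,
      inner_add_right, inner_add_right]
    ring
  have e2 : ⟪hx p.1 p.2, ε • (F1 p.1 p.2 - F2 p.1 p.2) +
      ε ^ 2 • (R1 p.1 p.2 ε - R2 p.1 p.2 ε)⟫ = ε * u - ε * v + ε ^ 2 * r - ε ^ 2 * s := by
    rw [inner_add_right, real_inner_smul_right, real_inner_smul_right,
      inner_sub_right, inner_sub_right]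
    ring
  rw [e1, e2]
  -- pointwise bounds
  have hεIcc : ε ∈ Icc (-1 : ℝ) 1 := ⟨by linarith, hε1⟩
  have haM : |a| ≤ M := by
    have := hC1 p hpK
    rw [Real.norm_eq_abs] at this
    exact this.trans hC1M
  have hwM : ‖w‖ ≤ M := (hC2 p hpK).trans hC2M
  have hinner_bound : ∀ y : EuclideanSpace ℝ (Fin n), ‖y‖ ≤ M → |⟪w, y⟫| ≤ M ^ 2 := by
    intro y hy
    calc |⟪w, y⟫| ≤ ‖w‖ * ‖y‖ := abs_real_inner_le_norm w y
      _ ≤ M * M := mul_le_mul hwM hy (norm_nonneg _) (le_of_lt hM0)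
      _ = M ^ 2 := by ring
  have huM : |u| ≤ M ^ 2 := hinner_bound _ ((hC3 p hpK).trans hC3M)
  have hvM : |v| ≤ M ^ 2 := hinner_bound _ ((hC4 p hpK).trans hC4M)
  have hrM : |r| ≤ M ^ 2 := hinner_bound _ ((hC5 (p, ε) ⟨hpK, hεIcc⟩).trans hC5M)
  have hsM : |s| ≤ M ^ 2 := hinner_bound _ ((hC6 (p, ε) ⟨hpK, hεIcc⟩).trans hC6M)
  rcases hpmem with hpA | hpB
  · -- Case A
    exact crossing_auxA M a u v r s δ ε hM1 hε0 hε1 huM hvM hrM hsM haM hδpos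
      (hδ p hpA) hεδ
  · -- Case B
    have hq := hB p hpB ε ⟨hε0, hε1⟩
    rw [← ha_def, ← hw_def, ← hu_def, ← hv_def] at hq
    have hq' : ε * ξ0 ≤ a * u + ε * ((u ^ 2 - v ^ 2) / 2) :=
      le_trans (mul_le_mul_of_nonneg_left (hξ0 p (hBsub hpB)) hε0.le) hq
    exact crossing_auxB M a u v r s ξ0 ε hM1 hε0 hε1 huM hvM hrM hsM hξ0pos hq' hεξ
end

section
/- Suppose |G(t,x)| ≤ M and |R(t,x,ε)| ≤ M for all (t,x,ε), and that G is Lipschitz with respect to x with constant L, uniformly in t. Let ε ∈ [−1,1], z ∈ ℝⁿ, and let x : [0,T] → ℝⁿ be a differentiable function with x(0) = z satisfying x'(t) = ε·G(t, x(t)) + ε²·R(t, x(t), ε) for all t ∈ [0,T]. Then the time-T map admits the first-order expansion |x(T) − z − ε·g(z)| ≤ ε²·M·T·(L·T + 1). -/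
/-!
The remainder `y(t) = x(t) - z - ε ∫₀ᵗ G(s,z) ds` vanishes at `0` and has derivative
`ε (G(t,x(t)) - G(t,z)) + ε² R(t,x(t),ε)`. Since `‖x(t) - z‖ ≤ 2|ε| M t`, the Lipschitz bound gives
`‖y'(t)‖ ≤ ε² M (2 L t + 1)`, which is the derivative of `ε² M (L t² + t)`; comparing `y` with this
barrier by the mean value inequality yields the estimate at `t = T`.
-/

open Set

section

variable {E : Type*} [NormedAddCommGroup E] [NormedSpace ℝ E]

theorem norm_smul_add_sq_smul_le (ε : ℝ) (a b : E) :
    ‖ε • a + ε ^ 2 • b‖ ≤ |ε| * ‖a‖ + ε ^ 2 * ‖b‖ :=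
  calc ‖ε • a + ε ^ 2 • b‖ ≤ ‖ε • a‖ + ‖ε ^ 2 • b‖ := norm_add_le _ _
    _ = |ε| * ‖a‖ + ε ^ 2 * ‖b‖ := by
      rw [norm_smul, norm_smul, Real.norm_eq_abs, Real.norm_eq_abs, abs_pow, sq_abs]

theorem norm_smul_add_sq_smul_le_two_mul {ε M : ℝ} (hε : |ε| ≤ 1) {a b : E}
    (ha : ‖a‖ ≤ M) (hb : ‖b‖ ≤ M) : ‖ε • a + ε ^ 2 • b‖ ≤ 2 * |ε| * M := by
  have hε2 : ε ^ 2 ≤ |ε| := by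
    rw [← sq_abs, sq]
    exact mul_le_of_le_one_left (abs_nonneg ε) hε
  calc ‖ε • a + ε ^ 2 • b‖ ≤ |ε| * ‖a‖ + ε ^ 2 * ‖b‖ := norm_smul_add_sq_smul_le ε a b
    _ ≤ |ε| * M + |ε| * M := by gcongr
    _ = 2 * |ε| * M := by ring

theorem image_norm_le_of_norm_derivWithin_Icc_le_deriv_boundary {f f' : ℝ → E} {B B' : ℝ → ℝ}
    {a b : ℝ} (hf : ∀ t ∈ Icc a b, HasDerivWithinAt f (f' t) (Icc a b) t)
    (hB : ∀ t, HasDerivAt B (B' t) t) (ha : ‖f a‖ ≤ B a)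
    (bound : ∀ t ∈ Ico a b, ‖f' t‖ ≤ B' t) : ∀ t ∈ Icc a b, ‖f t‖ ≤ B t := by
  refine image_norm_le_of_norm_deriv_right_le_deriv_boundary
    (fun t ht => (hf t ht).continuousWithinAt) (fun t ht => ?_) ha hB bound
  exact ((hf t (Ico_subset_Icc_self ht)).mono (Icc_subset_Icc_left ht.1)).mono_of_mem_nhdsWithin
    (Icc_mem_nhdsGE ht.2)

end

theorem hasDerivAt_const_mul_quadratic (c L t : ℝ) :
    HasDerivAt (fun t => c * (L * t ^ 2 + t)) (c * (2 * L * t + 1)) t := by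
  refine ((((hasDerivAt_pow 2 t).const_mul L).add (hasDerivAt_id' t)).const_mul c).congr_deriv ?_
  push_cast
  ring

theorem time_T_map_expansion_general {n : ℕ} (T : ℝ) (hT : 0 < T)
    (G : ℝ → EuclideanSpace ℝ (Fin n) → EuclideanSpace ℝ (Fin n))
    (R : ℝ → EuclideanSpace ℝ (Fin n) → ℝ → EuclideanSpace ℝ (Fin n))
    (hGc : Continuous (fun p : ℝ × EuclideanSpace ℝ (Fin n) => G p.1 p.2))
    (M L : ℝ) (hL : 0 ≤ L)
    (hGM : ∀ t x, ‖G t x‖ ≤ M)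
    (hRM : ∀ t x, ∀ ε ∈ Icc (-1 : ℝ) 1, ‖R t x ε‖ ≤ M)
    (hGlip : ∀ (t : ℝ) (x₁ x₂ : EuclideanSpace ℝ (Fin n)), ‖G t x₁ - G t x₂‖ ≤ L * ‖x₁ - x₂‖)
    (ε : ℝ) (hε : ε ∈ Icc (-1 : ℝ) 1)
    (z : EuclideanSpace ℝ (Fin n)) (x : ℝ → EuclideanSpace ℝ (Fin n)) (hx0 : x 0 = z)
    (hode : ∀ t ∈ Icc (0 : ℝ) T,
      HasDerivWithinAt x (ε • G t (x t) + ε ^ 2 • R t (x t) ε) (Icc (0 : ℝ) T) t) :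
    ‖x T - z - ε • ∫ t in (0 : ℝ)..T, G t z‖ ≤ ε ^ 2 * M * T * (L * T + 1) := by
  have hεabs : |ε| ≤ 1 := abs_le.2 hε
  have hdisp : ∀ t ∈ Icc 0 T, ‖x t - z‖ ≤ 2 * |ε| * M * t :=
    image_norm_le_of_norm_derivWithin_Icc_le_deriv_boundary (fun t ht => (hode t ht).sub_const z)
      (fun t => (hasDerivAt_id t).const_mul (2 * |ε| * M)) (by simp [hx0])
      (fun t _ => by simpa using norm_smul_add_sq_smul_le_two_mul hεabs (hGM _ _) (hRM _ _ _ hε))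
  have hGz : Continuous fun t => G t z := hGc.comp (continuous_id.prodMk continuous_const)
  have hrem : ∀ t ∈ Icc 0 T, HasDerivWithinAt (fun t => x t - z - ε • ∫ s in (0 : ℝ)..t, G s z)
      (ε • (G t (x t) - G t z) + ε ^ 2 • R t (x t) ε) (Icc 0 T) t := fun t ht => by
    refine (((hode t ht).sub_const z).sub
      ((hGz.integral_hasStrictDerivAt 0 t).hasDerivAt.hasDerivWithinAt.const_smul ε)).congr_deriv ?_
    rw [smul_sub]
    abel
  have hbound : ∀ t ∈ Ico 0 T, ‖ε • (G t (x t) - G t z) + ε ^ 2 • R t (x t) ε‖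
      ≤ ε ^ 2 * M * (2 * L * t + 1) := fun t ht =>
    calc _ ≤ |ε| * ‖G t (x t) - G t z‖ + ε ^ 2 * ‖R t (x t) ε‖ := norm_smul_add_sq_smul_le _ _ _
      _ ≤ |ε| * (L * (2 * |ε| * M * t)) + ε ^ 2 * M := by
        gcongr
        · exact (hGlip _ _ _).trans (by gcongr; exact hdisp t (Ico_subset_Icc_self ht))
        · exact hRM _ _ _ hε
      _ = ε ^ 2 * M * (2 * L * t + 1) := by rw [← sq_abs ε]; ring
  calc ‖x T - z - ε • ∫ t in (0 : ℝ)..T, G t z‖ ≤ ε ^ 2 * M * (L * T ^ 2 + T) :=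
        image_norm_le_of_norm_derivWithin_Icc_le_deriv_boundary hrem
          (hasDerivAt_const_mul_quadratic (ε ^ 2 * M) L) (by simp [hx0]) hbound T
          (right_mem_Icc.2 hT.le)
    _ = ε ^ 2 * M * T * (L * T + 1) := by ring

/-- First-order expansion of the time-`T` map: if `x' = ε G(t,x) + ε² R(t,x,ε)` on `[0,T]`
with `x(0) = z`, `‖G‖ ≤ M`, `‖R‖ ≤ M`, `G` Lipschitz in `x` with constant `L`, and
`g(z) = ∫₀ᵀ G(t,z) dt`, then `‖x(T) − z − ε g(z)‖ ≤ ε² M T (L T + 1)`. -/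
theorem time_T_map_expansion {n : ℕ} (T : ℝ) (hT : 0 < T)
    (G : ℝ → EuclideanSpace ℝ (Fin n) → EuclideanSpace ℝ (Fin n))
    (R : ℝ → EuclideanSpace ℝ (Fin n) → ℝ → EuclideanSpace ℝ (Fin n))
    (hGc : Continuous (fun p : ℝ × EuclideanSpace ℝ (Fin n) => G p.1 p.2))
    (hGper : ∀ t x, G (t + T) x = G t x)
    (hRc : ContinuousOn (fun p : ℝ × EuclideanSpace ℝ (Fin n) × ℝ => R p.1 p.2.1 p.2.2)
      (univ ×ˢ univ ×ˢ Icc (-1 : ℝ) 1))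
    (M L : ℝ) (hL : 0 ≤ L)
    (hGM : ∀ t x, ‖G t x‖ ≤ M)
    (hRM : ∀ t x, ∀ ε ∈ Icc (-1 : ℝ) 1, ‖R t x ε‖ ≤ M)
    (hGlip : ∀ (t : ℝ) (x₁ x₂ : EuclideanSpace ℝ (Fin n)), ‖G t x₁ - G t x₂‖ ≤ L * ‖x₁ - x₂‖)
    (ε : ℝ) (hε : ε ∈ Icc (-1 : ℝ) 1)
    (z : EuclideanSpace ℝ (Fin n)) (x : ℝ → EuclideanSpace ℝ (Fin n)) (hx0 : x 0 = z)
    (hode : ∀ t ∈ Icc (0 : ℝ) T,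
      HasDerivWithinAt x (ε • G t (x t) + ε ^ 2 • R t (x t) ε) (Icc (0 : ℝ) T) t) :
    ‖x T - z - ε • ∫ t in (0 : ℝ)..T, G t z‖ ≤ ε ^ 2 * M * T * (L * T + 1) :=
  time_T_map_expansion_general T hT G R hGc M L hL hGM hRM hGlip ε hε z x hx0 hode
end
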